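/- Let α, β ∈ (0,1), n ∈ ℕ, n ≥ 1, let a₀,…,aₙ, b₁,…,b_{n+1}, k, k₀ ∈ ℝ with a_r k = b_{r+1} for r = 1,…,n, and set p(u) = Σ_{r=0}^n a_r u^r and q(u) = Σ_{r=1}^{n+1} b_r u^r. Then u(x,t) = k₀ E_α((a₀k² - b₁k) t^α) E_β(k x^β) is an exact solution of the time-space fractional diffusion–convection equation: for all x > 0 and t > 0, (C_t^α u)(x,t) = p'(u) ((C_x^β u)(x,t))² + p(u) (C_x^β (C_x^β u))(x,t) - q'(u) (C_x^β u)(x,t), where u = u(x,t). -/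

import Mathlib

/-
For `0 < γ < 1`, `s ↦ E_γ(c s^γ)` is an eigenfunction of the Caputo derivative of order `γ`
with eigenvalue `c`. Its derivative is `Σ c^(r+1) s^(γr+γ-1) / Γ(γr+γ)`, and integrating termwise
against `(t-s)^(-γ)` gives the Beta integrals `Γ(γr+γ) Γ(1-γ) / Γ(γr+1) · t^(γr)`, which
reassemble into `Γ(1-γ) c E_γ(c t^γ)`. The interchange is legitimate because the integrals of the
absolute values again form a Mittag-Leffler series, and these converge since
`Γ(x) ≥ a^(x-1) e^(-a)` for every `a ≥ 0`.

So for the separated `u` we get `C_t^α u = (a₀k² - b₁k) u`, `C_x^β u = k u`, `C_x^β C_x^β u = k² u`,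
and the right-hand side becomes `k u (k (u p(u))' - q'(u))`; the relations `a_r k = b_{r+1}` make
`k (u p(u))' - q'(u)` the constant `k a₀ - b₁`.
-/

/-- The two-parameter Mittag-Leffler function `E_{β,γ}(z) = Σ_{r=0}^∞ z^r / Γ(βr + γ)`. -/
noncomputable def mittagLeffler (β γ z : ℝ) : ℝ :=
  ∑' r : ℕ, z ^ r / Real.Gamma (β * r + γ)

/-- Caputo fractional partial derivative of order `α` with respect to `t`. -/
noncomputable def caputoT (α : ℝ) (u : ℝ → ℝ → ℝ) : ℝ → ℝ → ℝ := fun x t =>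
  (1 / Real.Gamma (1 - α)) * ∫ s in (0:ℝ)..t, deriv (fun s' => u x s') s * (t - s) ^ (-α)

/-- Caputo fractional partial derivative of order `β` with respect to `x`. -/
noncomputable def caputoX (β : ℝ) (u : ℝ → ℝ → ℝ) : ℝ → ℝ → ℝ := fun x t =>
  (1 / Real.Gamma (1 - β)) * ∫ y in (0:ℝ)..x, deriv (fun y' => u y' t) y * (x - y) ^ (-β)

/-- The exact solution `u(x,t) = k₀ E_α((a₀k² - b₁k) t^α) E_β(k x^β)`. -/
noncomputable def uSol (α β : ℝ) (a b : ℕ → ℝ) (k k₀ : ℝ) : ℝ → ℝ → ℝ := fun x t =>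
  k₀ * mittagLeffler α 1 ((a 0 * k ^ 2 - b 1 * k) * t ^ α) * mittagLeffler β 1 (k * x ^ β)

open Real MeasureTheory Set Filter

theorem rpow_mul_exp_neg_le_Gamma {a x : ℝ} (ha : 0 ≤ a) (hx : 1 ≤ x) :
    a ^ (x - 1) * exp (-a) ≤ Gamma x := by
  have hint : IntegrableOn (fun s => exp (-s) * s ^ (x - 1)) (Ioi 0) :=
    GammaIntegral_convergent (by linarith)
  calc a ^ (x - 1) * exp (-a) = ∫ s in Ioi a, exp (-s) * a ^ (x - 1) := by
        rw [integral_mul_const, integral_exp_neg_Ioi, mul_comm]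
    _ ≤ ∫ s in Ioi a, exp (-s) * s ^ (x - 1) := by
        refine setIntegral_mono_on ((integrableOn_exp_neg_Ioi a).mul_const _)
          (hint.mono_set (Ioi_subset_Ioi ha)) measurableSet_Ioi fun s hs => ?_
        gcongr
        exact mem_Ioi.mp hs |>.le
    _ ≤ ∫ s in Ioi 0, exp (-s) * s ^ (x - 1) :=
        setIntegral_mono_set hint
          (ae_restrict_of_forall_mem measurableSet_Ioi fun s hs => by
            have : (0:ℝ) < s := hs
            positivity)
          (Ioi_subset_Ioi ha).eventuallyLE
    _ = Gamma x := (Gamma_eq_integral (by linarith)).symm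

theorem summable_pow_div_Gamma {γ : ℝ} (hγ : 0 < γ) (δ z : ℝ) :
    Summable fun r : ℕ => z ^ r / Gamma (γ * r + δ) := by
  -- `a ^ γ = 2|z| + 1` turns the bound `Γ(γr+δ) ≥ a^(γr+δ-1) e^(-a)` into a geometric one.
  set a : ℝ := (2 * |z| + 1) ^ γ⁻¹
  have ha : 0 < a := by positivity
  have hρ : |z| / (2 * |z| + 1) < 1 := by
    rw [div_lt_one (by positivity)]; linarith [abs_nonneg z]
  refine Summable.of_norm_bounded_eventually_nat
    ((summable_geometric_of_lt_one (by positivity) hρ).mul_left (exp a / a ^ (δ - 1))) ?_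
  obtain ⟨N, hN⟩ := exists_nat_ge ((1 - δ) / γ)
  filter_upwards [eventually_ge_atTop N] with r hr
  have hx : 1 ≤ γ * r + δ := by
    have : (1 - δ) / γ ≤ r := hN.trans (by exact_mod_cast hr)
    rw [div_le_iff₀ hγ] at this; linarith
  have hΓ := rpow_mul_exp_neg_le_Gamma ha.le hx
  have hpow : a ^ (γ * r + δ - 1) = (2 * |z| + 1) ^ r * a ^ (δ - 1) := by
    have haγ : a ^ γ = 2 * |z| + 1 := by
      rw [← rpow_mul (by positivity), inv_mul_cancel₀ hγ.ne', rpow_one]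
    rw [add_sub_assoc, rpow_add ha, rpow_mul ha.le, haγ, rpow_natCast]
  rw [hpow] at hΓ
  rw [norm_div, norm_pow, Real.norm_eq_abs, Real.norm_of_nonneg (hΓ.trans' (by positivity)),
    div_le_iff₀ (by positivity)]
  calc |z| ^ r = exp a / a ^ (δ - 1) * (|z| / (2 * |z| + 1)) ^ r
        * ((2 * |z| + 1) ^ r * a ^ (δ - 1) * exp (-a)) := by
        rw [div_pow, exp_neg]; field_simp
    _ ≤ _ := by gcongr

theorem succ_div_Gamma_succ {γ : ℝ} (hγ : 0 < γ) (r : ℕ) :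
    ((r + 1 : ℕ) : ℝ) / Gamma (γ * (r + 1 : ℕ) + 1) = (Gamma (γ * r + γ))⁻¹ / γ := by
  have hpos : 0 < γ * r + γ := by positivity
  rw [show γ * ((r + 1 : ℕ) : ℝ) = γ * r + γ by push_cast; ring, Gamma_add_one hpos.ne']
  have := (Gamma_pos_of_pos hpos).ne'
  push_cast
  field_simp

theorem hasDerivAt_mittagLeffler_one {γ : ℝ} (hγ : 0 < γ) (z : ℝ) :
    HasDerivAt (mittagLeffler γ 1) (mittagLeffler γ γ z / γ) z := by
  set R := |z| + 1
  have hg : ∀ (r : ℕ) (w : ℝ), HasDerivAt (fun w => w ^ r / Gamma (γ * r + 1))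
      (r * w ^ (r - 1) / Gamma (γ * r + 1)) w := fun r w => (hasDerivAt_pow r w).div_const _
  have hu : Summable fun r : ℕ => r * R ^ (r - 1) / Gamma (γ * r + 1) := by
    refine (summable_nat_add_iff 1).mp ?_
    simp_rw [mul_div_right_comm _ (R ^ _), succ_div_Gamma_succ hγ, Nat.add_sub_cancel]
    simpa [div_eq_mul_inv, mul_comm, mul_left_comm, mul_assoc] using
      (summable_pow_div_Gamma hγ γ R).div_const γ
  have hbound : ∀ (r : ℕ), ∀ w ∈ Metric.ball (0 : ℝ) R,
      ‖r * w ^ (r - 1) / Gamma (γ * r + 1)‖ ≤ r * R ^ (r - 1) / Gamma (γ * r + 1) := by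
    intro r w hw
    have hΓ := Gamma_pos_of_pos (show 0 < γ * r + 1 by positivity)
    rw [mem_ball_zero_iff, Real.norm_eq_abs] at hw
    rw [norm_div, norm_mul, norm_pow, Real.norm_of_nonneg hΓ.le, Real.norm_natCast,
      Real.norm_eq_abs]
    gcongr
  have hz : z ∈ Metric.ball (0 : ℝ) R := by simp [R]
  have hderiv := hasDerivAt_tsum_of_isPreconnected hu Metric.isOpen_ball
    (convex_ball _ _).isPreconnected (fun r w _ => hg r w) hbound
    (Metric.mem_ball_self (by positivity)) (summable_pow_div_Gamma hγ 1 0) hz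
  refine hderiv.congr_deriv ?_
  rw [(Summable.of_norm_bounded hu fun r => hbound r z hz).tsum_eq_zero_add, mittagLeffler,
    ← tsum_div_const]
  simp_rw [mul_div_right_comm _ (z ^ _), succ_div_Gamma_succ hγ, Nat.add_sub_cancel]
  simp [div_eq_mul_inv, mul_comm, mul_left_comm]

theorem hasDerivAt_mittagLeffler_mul_rpow {γ : ℝ} (hγ : 0 < γ) (c : ℝ) {s : ℝ} (hs : 0 < s) :
    HasDerivAt (fun s => mittagLeffler γ 1 (c * s ^ γ))
      (c * s ^ (γ - 1) * mittagLeffler γ γ (c * s ^ γ)) s := by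
  refine ((hasDerivAt_mittagLeffler_one hγ _).comp s
    ((hasDerivAt_rpow_const (p := γ) (Or.inl hs.ne')).const_mul c)).congr_deriv ?_
  field_simp

theorem integral_rpow_mul_sub_rpow {p q T : ℝ} (hp : 0 < p) (hq : 0 < q) (hT : 0 < T) :
    ∫ s in (0 : ℝ)..T, s ^ (p - 1) * (T - s) ^ (q - 1)
      = Gamma p * Gamma q / Gamma (p + q) * T ^ (p + q - 1) := by
  apply Complex.ofReal_injective
  rw [← intervalIntegral.integral_ofReal]
  have hcast : ∀ s ∈ uIcc 0 T, ((s ^ (p - 1) * (T - s) ^ (q - 1) : ℝ) : ℂ)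
      = (s : ℂ) ^ ((p : ℂ) - 1) * ((T : ℂ) - s) ^ ((q : ℂ) - 1) := by
    intro s hs
    rw [uIcc_of_le hT.le] at hs
    rw [Complex.ofReal_mul, Complex.ofReal_cpow hs.1, Complex.ofReal_cpow (sub_nonneg.2 hs.2)]
    push_cast; rfl
  rw [intervalIntegral.integral_congr hcast, Complex.betaIntegral_scaled _ _ hT,
    Complex.betaIntegral_eq_Gamma_mul_div _ _ (by simpa) (by simpa)]
  rw [← Complex.ofReal_add, Complex.Gamma_ofReal, Complex.Gamma_ofReal, Complex.Gamma_ofReal,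
    ← Complex.ofReal_one, ← Complex.ofReal_sub, ← Complex.ofReal_cpow hT.le]
  push_cast
  ring

theorem intervalIntegrable_rpow_mul_sub_rpow {p q T : ℝ} (hp : 0 < p) (hq : 0 < q)
    (hT : 0 < T) :
    IntervalIntegrable (fun s => s ^ (p - 1) * (T - s) ^ (q - 1)) volume 0 T := by
  -- A non-integrable function has integral `0`, and this integral is positive.
  apply intervalIntegral.intervalIntegrable_of_integral_ne_zero
  rw [integral_rpow_mul_sub_rpow hp hq hT]
  have := Gamma_pos_of_pos hp
  have := Gamma_pos_of_pos hq
  have := Gamma_pos_of_pos (add_pos hp hq)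
  positivity

theorem deriv_mittagLeffler_mul_rpow {γ : ℝ} (hγ : 0 < γ) (c : ℝ) {s : ℝ} (hs : 0 < s) :
    deriv (fun s => mittagLeffler γ 1 (c * s ^ γ)) s
      = ∑' r : ℕ, c ^ (r + 1) / Gamma (γ * r + γ) * s ^ (γ * r + γ - 1) := by
  rw [(hasDerivAt_mittagLeffler_mul_rpow hγ c hs).deriv, mittagLeffler, ← tsum_mul_left]
  congr 1 with r
  rw [add_sub_assoc, rpow_add hs, rpow_mul_natCast hs.le, mul_pow]
  ring

theorem integrableOn_rpow_mul_sub_rpow_neg {γ t : ℝ} (hγ0 : 0 < γ) (hγ1 : γ < 1) (ht : 0 < t)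
    (r : ℕ) : IntegrableOn (fun s => s ^ (γ * r + γ - 1) * (t - s) ^ (-γ)) (Ioc 0 t) := by
  have := intervalIntegrable_rpow_mul_sub_rpow (p := γ * r + γ) (q := 1 - γ) (by positivity)
    (by linarith) ht
  rwa [intervalIntegrable_iff_integrableOn_Ioc_of_le ht.le, sub_sub_cancel_left] at this

theorem integral_rpow_mul_sub_rpow_neg {γ t : ℝ} (hγ0 : 0 < γ) (hγ1 : γ < 1) (ht : 0 < t)
    (r : ℕ) : ∫ s in Ioc 0 t, s ^ (γ * r + γ - 1) * (t - s) ^ (-γ)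
      = Gamma (γ * r + γ) * Gamma (1 - γ) / Gamma (γ * r + 1) * (t ^ γ) ^ r := by
  have := integral_rpow_mul_sub_rpow (p := γ * r + γ) (q := 1 - γ) (by positivity)
    (by linarith) ht
  rwa [intervalIntegral.integral_of_le ht.le, sub_sub_cancel_left, add_add_sub_cancel,
    add_sub_cancel_right, rpow_mul_natCast ht.le] at this

noncomputable def caputoDeriv (γ : ℝ) (f : ℝ → ℝ) (t : ℝ) : ℝ :=
  (1 / Gamma (1 - γ)) * ∫ s in (0 : ℝ)..t, deriv f s * (t - s) ^ (-γ)

theorem caputoDeriv_mittagLeffler_mul_rpow {γ : ℝ} (hγ0 : 0 < γ) (hγ1 : γ < 1) (c : ℝ) {t : ℝ}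
    (ht : 0 < t) :
    caputoDeriv γ (fun s => mittagLeffler γ 1 (c * s ^ γ)) t
      = c * mittagLeffler γ 1 (c * t ^ γ) := by
  have hΓ : 0 < Gamma (1 - γ) := Gamma_pos_of_pos (by linarith)
  set F : ℕ → ℝ → ℝ := fun r s =>
    c ^ (r + 1) / Gamma (γ * r + γ) * (s ^ (γ * r + γ - 1) * (t - s) ^ (-γ))
  have hF_int : ∀ r, IntegrableOn (F r) (Ioc 0 t) := fun r =>
    (integrableOn_rpow_mul_sub_rpow_neg hγ0 hγ1 ht r).const_mul _
  have hF_norm : ∀ r, ∫ s in Ioc 0 t, ‖F r s‖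
      = |c| * (Gamma (1 - γ) * ((|c| * t ^ γ) ^ r / Gamma (γ * r + 1))) := fun r => by
    have hΓr := Gamma_pos_of_pos (show 0 < γ * r + γ by positivity)
    have hnorm : ∀ s ∈ Ioc 0 t, ‖F r s‖
        = |c| ^ (r + 1) / Gamma (γ * r + γ) * (s ^ (γ * r + γ - 1) * (t - s) ^ (-γ)) :=
      fun s hs => by
        rw [norm_mul, norm_div, norm_pow, Real.norm_of_nonneg hΓr.le, Real.norm_eq_abs,
          Real.norm_of_nonneg (mul_nonneg (rpow_nonneg hs.1.le _)
            (rpow_nonneg (sub_nonneg.2 hs.2) _))]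
    rw [setIntegral_congr_fun measurableSet_Ioc hnorm, integral_const_mul,
      integral_rpow_mul_sub_rpow_neg hγ0 hγ1 ht, mul_pow, pow_succ]
    field_simp
  have hF : ∀ r, ∫ s in Ioc 0 t, F r s
      = c * (Gamma (1 - γ) * ((c * t ^ γ) ^ r / Gamma (γ * r + 1))) := fun r => by
    have hΓr := Gamma_pos_of_pos (show 0 < γ * r + γ by positivity)
    rw [integral_const_mul, integral_rpow_mul_sub_rpow_neg hγ0 hγ1 ht, mul_pow, pow_succ]
    field_simp
  have hderiv : ∀ s ∈ Ioc 0 t,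
      deriv (fun s => mittagLeffler γ 1 (c * s ^ γ)) s * (t - s) ^ (-γ) = ∑' r, F r s := by
    intro s hs
    rw [deriv_mittagLeffler_mul_rpow hγ0 c hs.1, ← tsum_mul_right]
    exact tsum_congr fun r => mul_assoc _ _ _
  have hsum := integral_tsum_of_summable_integral_norm hF_int (by
    simp_rw [hF_norm]
    exact ((summable_pow_div_Gamma hγ0 1 _).mul_left _).mul_left _)
  rw [caputoDeriv, intervalIntegral.integral_of_le ht.le,
    setIntegral_congr_fun measurableSet_Ioc hderiv, ← hsum]
  simp_rw [hF]
  rw [tsum_mul_left, tsum_mul_left, mittagLeffler]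
  field_simp

theorem caputoT_apply (α : ℝ) (u : ℝ → ℝ → ℝ) (x t : ℝ) :
    caputoT α u x t = caputoDeriv α (u x) t := rfl

theorem caputoX_apply (β : ℝ) (u : ℝ → ℝ → ℝ) (x t : ℝ) :
    caputoX β u x t = caputoDeriv β (fun y => u y t) x := rfl

theorem caputoDeriv_const_mul (γ K : ℝ) (f : ℝ → ℝ) (t : ℝ) :
    caputoDeriv γ (fun s => K * f s) t = K * caputoDeriv γ f t := by
  simp only [caputoDeriv, deriv_const_mul_field', mul_assoc, intervalIntegral.integral_const_mul]
  ring

theorem caputoDeriv_congr {γ : ℝ} {f g : ℝ → ℝ} (hfg : EqOn f g (Ioi 0)) {t : ℝ} (ht : 0 ≤ t) :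
    caputoDeriv γ f t = caputoDeriv γ g t := by
  unfold caputoDeriv
  congr 1
  refine intervalIntegral.integral_congr_ae (Eventually.of_forall fun s hs => ?_)
  rw [uIoc_of_le ht] at hs
  rw [(hfg.eventuallyEq_of_mem (Ioi_mem_nhds hs.1)).deriv_eq]

theorem caputoT_uSol {α : ℝ} (hα0 : 0 < α) (hα1 : α < 1) (β : ℝ) (a b : ℕ → ℝ) (k k₀ x : ℝ)
    {t : ℝ} (ht : 0 < t) :
    caputoT α (uSol α β a b k k₀) x t = (a 0 * k ^ 2 - b 1 * k) * uSol α β a b k k₀ x t := by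
  have hsep : uSol α β a b k k₀ x = fun s =>
      (k₀ * mittagLeffler β 1 (k * x ^ β)) * mittagLeffler α 1 ((a 0 * k ^ 2 - b 1 * k) * s ^ α) :=
    funext fun s => by simp only [uSol]; ring
  rw [caputoT_apply, hsep, caputoDeriv_const_mul, caputoDeriv_mittagLeffler_mul_rpow hα0 hα1 _ ht]
  ring

theorem caputoX_uSol {β : ℝ} (hβ0 : 0 < β) (hβ1 : β < 1) (α : ℝ) (a b : ℕ → ℝ) (k k₀ : ℝ)
    {x : ℝ} (hx : 0 < x) (t : ℝ) :
    caputoX β (uSol α β a b k k₀) x t = k * uSol α β a b k k₀ x t := by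
  rw [caputoX_apply]
  simp only [uSol]
  rw [caputoDeriv_const_mul, caputoDeriv_mittagLeffler_mul_rpow hβ0 hβ1 _ hx]
  ring

theorem caputoX_caputoX_uSol {β : ℝ} (hβ0 : 0 < β) (hβ1 : β < 1) (α : ℝ) (a b : ℕ → ℝ)
    (k k₀ : ℝ) {x : ℝ} (hx : 0 < x) (t : ℝ) :
    caputoX β (caputoX β (uSol α β a b k k₀)) x t = k ^ 2 * uSol α β a b k k₀ x t := by
  rw [caputoX_apply, caputoDeriv_congr (g := fun y => k * uSol α β a b k k₀ y t)
      (fun y hy => caputoX_uSol hβ0 hβ1 α a b k k₀ hy t) hx.le,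
    caputoDeriv_const_mul, ← caputoX_apply, caputoX_uSol hβ0 hβ1 α a b k k₀ hx t]
  ring

theorem diffusion_convection_rhs_eq (n : ℕ) (a b : ℕ → ℝ) (k u : ℝ)
    (hab : ∀ r : ℕ, 1 ≤ r → r ≤ n → a r * k = b (r + 1)) :
    (∑ r ∈ Finset.Icc 1 n, (r : ℝ) * a r * u ^ (r - 1)) * (k * u) ^ 2
      + (∑ r ∈ Finset.range (n + 1), a r * u ^ r) * (k ^ 2 * u)
      - (∑ r ∈ Finset.Icc 1 (n + 1), (r : ℝ) * b r * u ^ (r - 1)) * (k * u)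
    = (a 0 * k ^ 2 - b 1 * k) * u := by
  induction n with
  | zero =>
    rw [Finset.Icc_eq_empty_of_lt zero_lt_one, zero_add, Finset.Icc_self, Finset.sum_empty,
      Finset.sum_range_one, Finset.sum_singleton]
    simp only [Nat.cast_one, tsub_self, pow_zero]
    ring
  | succ m ih =>
    have hb : a (m + 1) * k = b (m + 2) := hab (m + 1) (by omega) le_rfl
    rw [Finset.sum_Icc_succ_top (by omega), Finset.sum_range_succ,
      Finset.sum_Icc_succ_top (by omega : 1 ≤ m + 1 + 1), Nat.add_sub_cancel, Nat.add_sub_cancel]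
    push_cast
    linear_combination ih (fun r h1 h2 => hab r h1 (by omega))
      + ((m : ℝ) + 2) * u ^ (m + 1) * (k * u) * hb

theorem fractional_diffusion_convection_exact_general (α β : ℝ)
    (hα : α ∈ Set.Ioo (0 : ℝ) 1) (hβ : β ∈ Set.Ioo (0 : ℝ) 1)
    (n : ℕ) (a b : ℕ → ℝ) (k k₀ : ℝ)
    (hab : ∀ r : ℕ, 1 ≤ r → r ≤ n → a r * k = b (r + 1)) :
    ∀ x : ℝ, 0 < x → ∀ t : ℝ, 0 < t →
      caputoT α (uSol α β a b k k₀) x t =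
        (∑ r ∈ Finset.Icc 1 n, (r : ℝ) * a r * (uSol α β a b k k₀ x t) ^ (r - 1)) *
            (caputoX β (uSol α β a b k k₀) x t) ^ 2
          + (∑ r ∈ Finset.range (n + 1), a r * (uSol α β a b k k₀ x t) ^ r) *
            caputoX β (caputoX β (uSol α β a b k k₀)) x t
          - (∑ r ∈ Finset.Icc 1 (n + 1), (r : ℝ) * b r * (uSol α β a b k k₀ x t) ^ (r - 1)) *
            caputoX β (uSol α β a b k k₀) x t := by
  intro x hx t ht
  rw [caputoT_uSol hα.1 hα.2 β a b k k₀ x ht, caputoX_uSol hβ.1 hβ.2 α a b k k₀ hx t,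
    caputoX_caputoX_uSol hβ.1 hβ.2 α a b k k₀ hx t]
  exact (diffusion_convection_rhs_eq n a b k _ hab).symm

/-- **Exact solution of the time-space fractional diffusion–convection equation.**
With `p(u) = Σ_{r=0}^n aᵣ uʳ`, `q(u) = Σ_{r=1}^{n+1} bᵣ uʳ`, and `aᵣ k = b_{r+1}` for
`r = 1,…,n`, the function `u(x,t) = k₀ E_α((a₀k² - b₁k)t^α) E_β(k x^β)` satisfies
`C_t^α u = p'(u) (C_x^β u)² + p(u) C_x^β(C_x^β u) - q'(u) C_x^β u` for `x, t > 0`. -/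
theorem fractional_diffusion_convection_exact (α β : ℝ)
    (hα : α ∈ Set.Ioo (0 : ℝ) 1) (hβ : β ∈ Set.Ioo (0 : ℝ) 1)
    (n : ℕ) (hn : 1 ≤ n) (a b : ℕ → ℝ) (k k₀ : ℝ)
    (hab : ∀ r : ℕ, 1 ≤ r → r ≤ n → a r * k = b (r + 1)) :
    ∀ x : ℝ, 0 < x → ∀ t : ℝ, 0 < t →
      caputoT α (uSol α β a b k k₀) x t =
        (∑ r ∈ Finset.Icc 1 n, (r : ℝ) * a r * (uSol α β a b k k₀ x t) ^ (r - 1)) *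
            (caputoX β (uSol α β a b k k₀) x t) ^ 2
          + (∑ r ∈ Finset.range (n + 1), a r * (uSol α β a b k k₀ x t) ^ r) *
            caputoX β (caputoX β (uSol α β a b k k₀)) x t
          - (∑ r ∈ Finset.Icc 1 (n + 1), (r : ℝ) * b r * (uSol α β a b k k₀ x t) ^ (r - 1)) *
            caputoX β (uSol α β a b k k₀) x t :=
  fractional_diffusion_convection_exact_general α β hα hβ n a b k k₀ hab
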